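/- Let f : ℝ² → ℝ be continuously differentiable, S = {f = 0}, and let C be a compact connected component of S contained in the nonsingular locus of S. Then the set {P ∈ C : ∂f/∂X_2(P) = 0} is nonempty; in fact it contains a point where X_1 attains its maximum on C and a point where X_1 attains its minimum on C. -/

import Mathlib

/-!
If `∂f/∂X₂` does not vanish at `P ∈ C`, the implicit function theorem writes `{f = f P}` near `P`
as the graph of a continuous function of `X₁`. Above a connected neighbourhood of `P.1` this
graph is a connected subset of `S` through `P`, hence lies in the component `C`, so `X₁`
takes on `C` values on both sides of `P.1`. The extrema of `X₁` on the compact set `C` are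
therefore points where `∂f/∂X₂` vanishes.
-/

open Filter Topology Set

namespace HasStrictFDerivAt

variable {𝕜 : Type*} [NontriviallyNormedField 𝕜]
  {E₁ : Type*} [NormedAddCommGroup E₁] [NormedSpace 𝕜 E₁] [CompleteSpace E₁]
  {E₂ : Type*} [NormedAddCommGroup E₂] [NormedSpace 𝕜 E₂] [CompleteSpace E₂]
  {F : Type*} [NormedAddCommGroup F] [NormedSpace 𝕜 F] [CompleteSpace F]
  {u : E₁ × E₂} {f : E₁ × E₂ → F} {f'u : E₁ × E₂ →L[𝕜] F}

/-- The implicit function is the second component of the inverse of a local homeomorphism,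
so it is continuous on a whole neighbourhood of the base point. -/
theorem eventually_continuousAt_implicitFunctionOfProdDomain
    (dfu : HasStrictFDerivAt f f'u u) (if₂u : (f'u ∘L .inr 𝕜 E₁ E₂).IsInvertible) :
    ∀ᶠ x in 𝓝 u.1, ContinuousAt (dfu.implicitFunctionOfProdDomain if₂u) x := by
  set e := (dfu.implicitFunctionDataOfProdDomain if₂u).toOpenPartialHomeomorph
  have hbase : Tendsto (fun x => (f u, x)) (𝓝 u.1) (𝓝 (f u, u.1)) :=
    (Continuous.prodMk_right (f u)).tendsto u.1
  have htarget : ∀ᶠ x in 𝓝 u.1, (f u, x) ∈ e.target :=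
    hbase.eventually (e.open_target.mem_nhds
      (dfu.implicitFunctionDataOfProdDomain if₂u).map_pt_mem_toOpenPartialHomeomorph_target)
  filter_upwards [htarget] with x hx
  exact continuous_snd.continuousAt.comp
    ((e.continuousAt_symm hx).comp (Continuous.prodMk_right (f u)).continuousAt)

theorem fst_image_connectedComponentIn_mem_nhds [LocallyConnectedSpace E₁]
    (dfu : HasStrictFDerivAt f f'u u) (if₂u : (f'u ∘L .inr 𝕜 E₁ E₂).IsInvertible) :
    Prod.fst '' connectedComponentIn {v | f v = f u} u ∈ 𝓝 u.1 := by
  set ψ := dfu.implicitFunctionOfProdDomain if₂u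
  set N := {x | ContinuousAt ψ x ∧ f (x, ψ x) = f u}
  have hN : N ∈ 𝓝 u.1 := (dfu.eventually_continuousAt_implicitFunctionOfProdDomain if₂u).and
    (dfu.eventually_apply_implicitFunctionOfProdDomain if₂u)
  set K := connectedComponentIn N u.1
  have hψu : ψ u.1 = u.2 :=
    (dfu.eventually_apply_eq_iff_implicitFunctionOfProdDomain if₂u).self_of_nhds.mp rfl
  have hKN : K ⊆ N := connectedComponentIn_subset N u.1
  have huK : u.1 ∈ K := mem_connectedComponentIn (mem_of_mem_nhds hN)
  have hgraph : (fun x => (x, ψ x)) '' K ⊆ connectedComponentIn {v | f v = f u} u := by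
    refine IsPreconnected.subset_connectedComponentIn ?_ ⟨u.1, huK, Prod.ext rfl hψu⟩ ?_
    · exact isPreconnected_connectedComponentIn.image _
        (fun x hx => (continuousAt_id.prodMk (hKN hx).1).continuousWithinAt)
    · rintro _ ⟨x, hx, rfl⟩
      exact (hKN hx).2
  filter_upwards [connectedComponentIn_mem_nhds hN] with x hx
  exact ⟨(x, ψ x), hgraph ⟨x, hx, rfl⟩, rfl⟩

end HasStrictFDerivAt

theorem ContinuousLinearMap.isInvertible_of_apply_one_ne_zero {𝕜 : Type*} [NormedField 𝕜]
    {g : 𝕜 →L[𝕜] 𝕜} (hg : g 1 ≠ 0) : g.IsInvertible :=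
  ⟨ContinuousLinearEquiv.unitsEquivAut 𝕜 (Units.mk0 (g 1) hg), by ext; simp⟩

section Extremum

variable {α β : Type*} [LinearOrder β] [TopologicalSpace β] [OrderTopology β] [DenselyOrdered β]
  {g : α → β} {s : Set α} {a : α}

theorem IsMaxOn.image_notMem_nhds [NoMaxOrder β] (h : IsMaxOn g s a) : g '' s ∉ 𝓝 (g a) := by
  intro hs
  obtain ⟨c, hac, hc⟩ := exists_Ico_subset_of_mem_nhds hs (exists_gt (g a))
  obtain ⟨b, hab, hbc⟩ := exists_between hac
  obtain ⟨x, hx, rfl⟩ := hc ⟨hab.le, hbc⟩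
  exact (h hx).not_gt hab

theorem IsMinOn.image_notMem_nhds [NoMinOrder β] (h : IsMinOn g s a) : g '' s ∉ 𝓝 (g a) := by
  intro hs
  obtain ⟨c, hca, hc⟩ := exists_Ioc_subset_of_mem_nhds hs (exists_lt (g a))
  obtain ⟨b, hcb, hba⟩ := exists_between hca
  obtain ⟨x, hx, rfl⟩ := hc ⟨hcb, hba.le⟩
  exact (h hx).not_gt hba

end Extremum

theorem fst_image_connectedComponentIn_mem_nhds_of_fderiv_ne_zero {f : ℝ × ℝ → ℝ} {p : ℝ × ℝ}
    (hf : ContDiffAt ℝ 1 f p) (hp : fderiv ℝ f p (0, 1) ≠ 0) :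
    Prod.fst '' connectedComponentIn {v | f v = f p} p ∈ 𝓝 p.1 :=
  (hf.hasStrictFDerivAt one_ne_zero).fst_image_connectedComponentIn_mem_nhds
    (ContinuousLinearMap.isInvertible_of_apply_one_ne_zero hp)

theorem stmt10_general (f : ℝ × ℝ → ℝ) (hf : ContDiff ℝ 1 f)
    (S : Set (ℝ × ℝ)) (hS : S = {p | f p = 0})
    (C : Set (ℝ × ℝ)) (hCconn : IsConnected C) (hCS : C ⊆ S)
    (hCmax : ∀ D, IsConnected D → C ⊆ D → D ⊆ S → D = C)
    (hCcpt : IsCompact C) :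
    (∃ P ∈ C, (∀ x ∈ C, x.1 ≤ P.1) ∧ fderiv ℝ f P (0, 1) = 0) ∧
    (∃ Q ∈ C, (∀ x ∈ C, Q.1 ≤ x.1) ∧ fderiv ℝ f Q (0, 1) = 0) := by
  have hvertical : ∀ p ∈ C, fderiv ℝ f p (0, 1) ≠ 0 → Prod.fst '' C ∈ 𝓝 p.1 := by
    intro p hp hp'
    have hfp : f p = 0 := by simpa only [hS, mem_ofPred_eq] using hCS hp
    have hlevel : {v | f v = f p} = S := by rw [hS, hfp]
    have hcomp : connectedComponentIn S p = C :=
      hCmax _ (isConnected_connectedComponentIn_iff.2 (hCS hp))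
        (hCconn.isPreconnected.subset_connectedComponentIn hp hCS)
        (connectedComponentIn_subset S p)
    simpa only [hlevel, hcomp] using
      fst_image_connectedComponentIn_mem_nhds_of_fderiv_ne_zero hf.contDiffAt hp'
  obtain ⟨P, hP, hPmax⟩ := hCcpt.exists_isMaxOn hCconn.nonempty continuous_fst.continuousOn
  obtain ⟨Q, hQ, hQmin⟩ := hCcpt.exists_isMinOn hCconn.nonempty continuous_fst.continuousOn
  refine ⟨⟨P, hP, fun x hx => hPmax hx, ?_⟩, ⟨Q, hQ, fun x hx => hQmin hx, ?_⟩⟩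
  · by_contra hP'
    exact hPmax.image_notMem_nhds (hvertical P hP hP')
  · by_contra hQ'
    exact hQmin.image_notMem_nhds (hvertical Q hQ hQ')

/-- Let `f : ℝ² → ℝ` be `C¹`, `S = {f = 0}`, and `C` a compact connected component of `S`
contained in the nonsingular locus of `S`. Then `{P ∈ C | ∂f/∂X₂(P) = 0}` is nonempty;
in fact it contains a point where `X₁` attains its maximum on `C` and a point where `X₁`
attains its minimum on `C`. -/
theorem stmt10 (f : ℝ × ℝ → ℝ) (hf : ContDiff ℝ 1 f)
    (S : Set (ℝ × ℝ)) (hS : S = {p | f p = 0})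
    (C : Set (ℝ × ℝ)) (hCconn : IsConnected C) (hCS : C ⊆ S)
    (hCmax : ∀ D, IsConnected D → C ⊆ D → D ⊆ S → D = C)
    (hCcpt : IsCompact C)
    (hns : ∀ p ∈ C, fderiv ℝ f p ≠ 0) :
    (∃ P ∈ C, (∀ x ∈ C, x.1 ≤ P.1) ∧ fderiv ℝ f P (0, 1) = 0) ∧
    (∃ Q ∈ C, (∀ x ∈ C, Q.1 ≤ x.1) ∧ fderiv ℝ f Q (0, 1) = 0) :=
  stmt10_general f hf S hS C hCconn hCS hCmax hCcpt
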